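/- Let m = 2 + 12q where q = 2 + 2d for some nonnegative integer d, and let u = min{ i ≥ 1 : the i-th binary digit of q equals 1 }. Then for every n ≥ 1 and every k with 0 ≤ k ≤ 2^u − 1, we have F_m((1+2k)·2^n) ≡ (1+2k)·2^n (mod 2^{n+u+1}), F'_m((1+2k)·2^n) ≡ 1 (mod 4), and ν₂( F_m((1+2k)·2^n) − (1+2k)·2^n ) = n + u + 1. -/

import Mathlib

/-!
Write `q = 2^u q'` with `q'` odd, so that `m = 2 + 12 q = 2c + 2` with `c = 2^(u+1) · 3q'`.
The product formula `F_a L_(a+k) = F_(2a+k) - (-1)^a F_k` for the Lucas polynomials `L`, taken at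
`a = c`, `k = 2`, factors `F_m - X = F_c L_(c+2)`. At an even point `x`, every `L_(2j)(x)` is twice an
odd number, and the doubling formula `F_(2a) = F_a L_a` gives `F_(2^(r+1) w)(x) = 2^r x · odd` for odd
`w`. Hence `F_m(x) - x = 2^(u+1) x · odd`. Expanding `F'_m` at `0` shows that `F'_m(x)` is
congruent mod 4 to the coefficient of `X` in `F_m`, which is `m / 2 = 1 + 6q`.
-/

open Polynomial

noncomputable def fibPoly : ℕ → Polynomial ℤ
  | 0 => 0
  | 1 => 1
  | n + 2 => X * fibPoly (n + 1) + fibPoly n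

noncomputable def lucasPoly : ℕ → ℤ[X]
  | 0 => 2
  | 1 => X
  | n + 2 => X * lucasPoly (n + 1) + lucasPoly n

lemma fibPoly_add_two (n : ℕ) : fibPoly (n + 2) = X * fibPoly (n + 1) + fibPoly n := rfl

lemma lucasPoly_eq_two_mul_fibPoly_sub (n : ℕ) :
    lucasPoly n = 2 * fibPoly (n + 1) - X * fibPoly n := by
  induction n using Nat.twoStepInduction with
  | zero => simp [lucasPoly, fibPoly]
  | one => simp [lucasPoly, fibPoly]; ring
  | more n ih₁ ih₂ =>
    rw [lucasPoly, ih₁, ih₂, fibPoly_add_two (n + 1), fibPoly_add_two n]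
    ring

lemma fibPoly_mul_lucasPoly_add (a k : ℕ) :
    fibPoly a * lucasPoly (a + k) = fibPoly (2 * a + k) - (-1) ^ a * fibPoly k := by
  induction a using Nat.twoStepInduction generalizing k with
  | zero => simp [fibPoly]
  | one =>
    rw [lucasPoly_eq_two_mul_fibPoly_sub, add_comm 1 k, show 2 * 1 + k = k + 2 by ring,
      fibPoly_add_two]
    simp [fibPoly]; ring
  | more a ih₁ ih₂ =>
    have h₀ := ih₁ (k + 2)
    have h₁ := ih₂ (k + 1)
    rw [show a + (k + 2) = a + 2 + k by ring, show 2 * a + (k + 2) = 2 * a + k + 2 by ring,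
      fibPoly_add_two k] at h₀
    rw [show a + 1 + (k + 1) = a + 2 + k by ring,
      show 2 * (a + 1) + (k + 1) = 2 * a + k + 2 + 1 by ring] at h₁
    rw [fibPoly_add_two, show 2 * (a + 2) + k = 2 * a + k + 2 + 2 by ring,
      fibPoly_add_two (2 * a + k + 2)]
    linear_combination X * h₁ + h₀

lemma fibPoly_two_mul (a : ℕ) : fibPoly (2 * a) = fibPoly a * lucasPoly a := by
  simpa [fibPoly] using (fibPoly_mul_lucasPoly_add a 0).symm

lemma coeff_zero_fibPoly_two_mul (c : ℕ) : (fibPoly (2 * c)).coeff 0 = 0 := by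
  induction c with
  | zero => simp [fibPoly]
  | succ c ih => rw [Nat.mul_succ, fibPoly_add_two]; simp [ih]

lemma coeff_zero_fibPoly_two_mul_add_one (c : ℕ) : (fibPoly (2 * c + 1)).coeff 0 = 1 := by
  induction c with
  | zero => simp [fibPoly]
  | succ c ih => rw [Nat.mul_succ, add_right_comm, fibPoly_add_two]; simp [ih]

lemma coeff_one_fibPoly_two_mul (c : ℕ) : (fibPoly (2 * c)).coeff 1 = c := by
  induction c with
  | zero => simp [fibPoly]
  | succ c ih =>
    rw [Nat.mul_succ, fibPoly_add_two, coeff_add, coeff_X_mul, ih,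
      coeff_zero_fibPoly_two_mul_add_one]
    push_cast; ring

section Taylor

variable {R : Type*} [CommRing R]

lemma sq_dvd_eval_sub_coeff (p : R[X]) (x : R) :
    x ^ 2 ∣ p.eval x - p.coeff 0 - p.coeff 1 * x := by
  obtain ⟨k, hk⟩ := binomExpansion p 0 x
  rw [zero_add] at hk
  refine ⟨k, ?_⟩
  rw [hk, coeff_zero_eq_eval_zero, ← coeff_zero_eq_eval_zero (derivative p), coeff_derivative]
  ring

lemma four_dvd_eval_derivative_sub_coeff (p : R[X]) {x : R} (hx : 2 ∣ x) :
    4 ∣ (derivative p).eval x - p.coeff 1 := by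
  obtain ⟨y, rfl⟩ := hx
  obtain ⟨k, hk⟩ := sq_dvd_eval_sub_coeff (derivative p) (2 * y)
  refine ⟨p.coeff 2 * y + k * y ^ 2, ?_⟩
  simp only [coeff_derivative] at hk
  linear_combination hk

end Taylor

lemma dvd_eval_fibPoly_two_mul_add_one_sub_one (c : ℕ) (x : ℤ) :
    x ∣ (fibPoly (2 * c + 1)).eval x - 1 := by
  obtain ⟨k, hk⟩ := sq_dvd_eval_sub_coeff (fibPoly (2 * c + 1)) x
  rw [coeff_zero_fibPoly_two_mul_add_one] at hk
  exact ⟨(fibPoly (2 * c + 1)).coeff 1 + x * k, by linear_combination hk⟩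

lemma sq_dvd_eval_fibPoly_two_mul_sub (c : ℕ) (x : ℤ) :
    x ^ 2 ∣ (fibPoly (2 * c)).eval x - c * x := by
  simpa [coeff_zero_fibPoly_two_mul, coeff_one_fibPoly_two_mul] using
    sq_dvd_eval_sub_coeff (fibPoly (2 * c)) x

section EvenPoint

variable {x : ℤ} (hx : 2 ∣ x)
include hx

lemma eval_derivative_fibPoly_two_mul_modEq (c : ℕ) :
    (derivative (fibPoly (2 * c))).eval x ≡ c [ZMOD 4] := by
  have h4 := four_dvd_eval_derivative_sub_coeff (fibPoly (2 * c)) hx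
  rw [coeff_one_fibPoly_two_mul] at h4
  exact (Int.modEq_iff_dvd.mpr h4).symm

lemma odd_eval_fibPoly_two_mul_add_one (c : ℕ) : Odd ((fibPoly (2 * c + 1)).eval x) := by
  obtain ⟨k, hk⟩ := dvd_eval_fibPoly_two_mul_add_one_sub_one c x
  obtain ⟨y, rfl⟩ := hx
  exact ⟨y * k, by linear_combination hk⟩

lemma exists_odd_eval_fibPoly_two_mul {w : ℕ} (hw : Odd w) :
    ∃ g, Odd g ∧ (fibPoly (2 * w)).eval x = x * g := by
  obtain ⟨k, hk⟩ := sq_dvd_eval_fibPoly_two_mul_sub w x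
  obtain ⟨y, rfl⟩ := hx
  exact ⟨w + 2 * y * k, (hw.natCast (R := ℤ)).add_even ⟨y * k, by ring⟩, by linear_combination hk⟩

lemma exists_odd_eval_lucasPoly_two_mul (c : ℕ) :
    ∃ h, Odd h ∧ (lucasPoly (2 * c)).eval x = 2 * h := by
  obtain ⟨k, hk⟩ := sq_dvd_eval_fibPoly_two_mul_sub c x
  have hodd := odd_eval_fibPoly_two_mul_add_one hx c
  obtain ⟨y, rfl⟩ := hx
  refine ⟨(fibPoly (2 * c + 1)).eval (2 * y) - 2 * y ^ 2 * (c + 2 * y * k),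
    hodd.sub_even ⟨y ^ 2 * (c + 2 * y * k), by ring⟩, ?_⟩
  rw [lucasPoly_eq_two_mul_fibPoly_sub, eval_sub, eval_mul, eval_mul]
  simp only [eval_ofNat, eval_X]
  linear_combination (-2 * y) * hk

lemma exists_odd_eval_fibPoly_two_pow_mul {w : ℕ} (hw : Odd w) (r : ℕ) :
    ∃ g, Odd g ∧ (fibPoly (2 ^ (r + 1) * w)).eval x = 2 ^ r * x * g := by
  induction r with
  | zero => simpa using exists_odd_eval_fibPoly_two_mul hx hw
  | succ r ih =>
    obtain ⟨g, hg, hF⟩ := ih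
    obtain ⟨h, hh, hL⟩ := exists_odd_eval_lucasPoly_two_mul hx (2 ^ r * w)
    refine ⟨g * h, hg.mul hh, ?_⟩
    rw [show 2 ^ (r + 1 + 1) * w = 2 * (2 ^ (r + 1) * w) by ring, fibPoly_two_mul, eval_mul, hF,
      show 2 ^ (r + 1) * w = 2 * (2 ^ r * w) by ring, hL]
    ring

lemma exists_odd_eval_fibPoly_add_two_sub {w : ℕ} (hw : Odd w) (r : ℕ) :
    ∃ g, Odd g ∧ (fibPoly (2 ^ (r + 2) * w + 2)).eval x - x = 2 ^ (r + 1) * x * g := by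
  obtain ⟨g, hg, hF⟩ := exists_odd_eval_fibPoly_two_pow_mul hx hw r
  obtain ⟨h, hh, hL⟩ := exists_odd_eval_lucasPoly_two_mul hx (2 ^ r * w + 1)
  have hprod := congrArg (eval x) (fibPoly_mul_lucasPoly_add (2 ^ (r + 1) * w) 2)
  rw [show 2 ^ (r + 1) * w + 2 = 2 * (2 ^ r * w + 1) by ring,
    show 2 * (2 ^ (r + 1) * w) + 2 = 2 ^ (r + 2) * w + 2 by ring,
    Even.neg_one_pow ⟨2 ^ r * w, by ring⟩, show fibPoly 2 = X by simp [fibPoly]] at hprod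
  simp only [eval_mul, eval_sub, eval_X, one_mul, hF, hL] at hprod
  exact ⟨g * h, hg.mul hh, by linear_combination -hprod⟩

end EvenPoint

lemma exists_odd_eq_two_pow_mul_of_testBit {q u : ℕ} (hlow : ∀ i < u, q.testBit i = false)
    (hu : q.testBit u = true) : ∃ q', Odd q' ∧ q = 2 ^ u * q' := by
  have hmod : q % 2 ^ u = 0 := Nat.zero_of_testBit_eq_false fun i => by
    rw [Nat.testBit_mod_two_pow]
    by_cases hi : i < u <;> simp [hi, hlow]
  refine ⟨q / 2 ^ u, Nat.odd_iff.mpr ?_, (Nat.mul_div_cancel' (Nat.dvd_of_mod_eq_zero hmod)).symm⟩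
  have h0 := Nat.testBit_div_two_pow (n := u) q 0
  rw [zero_add, hu, Nat.testBit_zero] at h0
  simpa using h0

lemma padicValInt_pow_mul_of_not_dvd {p : ℕ} [Fact p.Prime] (K : ℕ) {E : ℤ}
    (hE : ¬(p : ℤ) ∣ E) : padicValInt p (p ^ K * E) = K := by
  have hE0 : E ≠ 0 := by rintro rfl; exact hE (dvd_zero _)
  rw [padicValInt.mul (pow_ne_zero _ (by exact_mod_cast (Fact.out : p.Prime).ne_zero)) hE0,
    padicValInt.eq_zero_of_not_dvd hE, ← Nat.cast_pow, padicValInt.of_nat,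
    padicValNat.prime_pow, add_zero]

theorem fibPoly_m_two_mod_twelve_general (q d u : ℕ) (hq : q = 2 + 2 * d)
    (hu : q.testBit u = true)
    (humin : ∀ i, 1 ≤ i → i < u → q.testBit i = false) :
    ∀ n : ℕ, 1 ≤ n → ∀ k : ℕ, k ≤ 2 ^ u - 1 →
      (fibPoly (2 + 12 * q)).eval ((1 + 2 * (k : ℤ)) * 2 ^ n) ≡
        (1 + 2 * (k : ℤ)) * 2 ^ n [ZMOD (2 : ℤ) ^ (n + u + 1)] ∧
      (derivative (fibPoly (2 + 12 * q))).eval ((1 + 2 * (k : ℤ)) * 2 ^ n) ≡ 1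
        [ZMOD (4 : ℤ)] ∧
      padicValInt 2 ((fibPoly (2 + 12 * q)).eval ((1 + 2 * (k : ℤ)) * 2 ^ n) -
        (1 + 2 * (k : ℤ)) * 2 ^ n) = n + u + 1 := by
  intro n hn k _
  obtain ⟨n, rfl⟩ : ∃ n', n = n' + 1 := ⟨n - 1, by omega⟩
  have hlow : ∀ i < u, q.testBit i = false
    | 0, _ => by simp [Nat.testBit_zero, hq]
    | i + 1, hi => humin (i + 1) (by omega) hi
  obtain ⟨q', hq', hqu⟩ := exists_odd_eq_two_pow_mul_of_testBit hlow hu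
  have hm : 2 + 12 * q = 2 ^ (u + 2) * (3 * q') + 2 := by rw [hqu, pow_add]; ring
  have ht : Odd (1 + 2 * (k : ℤ)) := ⟨k, by ring⟩
  have hx : 2 ∣ (1 + 2 * (k : ℤ)) * 2 ^ (n + 1) := ⟨(1 + 2 * k) * 2 ^ n, by ring⟩
  obtain ⟨g, hg, hsub⟩ := exists_odd_eval_fibPoly_add_two_sub hx ((by decide : Odd 3).mul hq') u
  have hval : (fibPoly (2 + 12 * q)).eval ((1 + 2 * (k : ℤ)) * 2 ^ (n + 1)) -
      (1 + 2 * (k : ℤ)) * 2 ^ (n + 1) = 2 ^ (n + 1 + u + 1) * ((1 + 2 * k) * g) := by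
    rw [hm, hsub]; ring
  refine ⟨(Int.modEq_iff_dvd.mpr (Dvd.intro _ hval.symm)).symm, ?_, ?_⟩
  · have hderiv := eval_derivative_fibPoly_two_mul_modEq hx (1 + 6 * q)
    rw [show 2 * (1 + 6 * q) = 2 + 12 * q by ring] at hderiv
    exact hderiv.trans (Int.modEq_iff_dvd.mpr ⟨-3 - 3 * d, by rw [hq]; push_cast; ring⟩)
  · rw [hval]
    exact padicValInt_pow_mul_of_not_dvd _
      (Int.not_even_iff_odd.mpr (ht.mul hg) ∘ even_iff_two_dvd.mpr)

theorem fibPoly_m_two_mod_twelve (q d u : ℕ) (hq : q = 2 + 2 * d)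
    (hu1 : 1 ≤ u) (hu : q.testBit u = true)
    (humin : ∀ i, 1 ≤ i → i < u → q.testBit i = false) :
    ∀ n : ℕ, 1 ≤ n → ∀ k : ℕ, k ≤ 2 ^ u - 1 →
      (fibPoly (2 + 12 * q)).eval ((1 + 2 * (k : ℤ)) * 2 ^ n) ≡
        (1 + 2 * (k : ℤ)) * 2 ^ n [ZMOD (2 : ℤ) ^ (n + u + 1)] ∧
      (derivative (fibPoly (2 + 12 * q))).eval ((1 + 2 * (k : ℤ)) * 2 ^ n) ≡ 1
        [ZMOD (4 : ℤ)] ∧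
      padicValInt 2 ((fibPoly (2 + 12 * q)).eval ((1 + 2 * (k : ℤ)) * 2 ^ n) -
        (1 + 2 * (k : ℤ)) * 2 ^ n) = n + u + 1 :=
  fibPoly_m_two_mod_twelve_general q d u hq hu humin
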